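/- For the ladder n-level closed-loop system, let ψ be a closed-loop solution with ‖ψ(0)‖ = 1, let β ∈ (0,1), and suppose that for all t ≥ 0 one has |ψₙ(t)| ≥ β and |ψ_{n−1}(t)| ≥ |ψ_j(t)| for every 1 ≤ j ≤ n−2. Then for all t ≥ 0, d/dt V(ψ(t)) ≤ −(2 β k_{n−1}/(n−1)) · g(t) · V(ψ(t))^{(α_{n−1}+1)/2}, where g(t) = |cos(arg ψₙ(t) − arg ψ_{n−1}(t))|^{α_{n−1}+1}. -/

import Mathlib

/-!
The closed-loop Hamiltonian `H₀ + ∑ u_p H_p` is Hermitian, so `‖ψ(t)‖ = 1` for all `t`. Only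
the last control channel couples to level `n`, so `V' = -2 |ψₙ| u_{n-1} c_{n-1}`, and
`u_{n-1} c_{n-1} = k_{n-1} |c_{n-1}|^{α+1} = k_{n-1} |ψ_{n-1}|^{α+1} g`. The domination
hypothesis gives `V = ∑_{j<n} |ψ_j|² ≤ (n-1) |ψ_{n-1}|²`, hence
`V^{(α+1)/2} ≤ (n-1)^{(α+1)/2} |ψ_{n-1}|^{α+1} ≤ (n-1) |ψ_{n-1}|^{α+1}`; finally `|ψₙ| ≥ β`.
-/

open scoped BigOperators

/-- The real matrix `X_p` (embedded in ℂ) of the ladder system: entry `-1` at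
position `(p, p+1)` and entry `1` at position `(p+1, p)` (0-based indices),
all other entries `0`. -/
noncomputable def ladderX (n : ℕ) (p : ℕ) : Matrix (Fin n) (Fin n) ℂ :=
  Matrix.of fun i j =>
    if (i : ℕ) = p ∧ (j : ℕ) = p + 1 then -1
    else if (i : ℕ) = p + 1 ∧ (j : ℕ) = p then 1 else 0

/-- The control Hamiltonian `H_p = i X_p`. -/
noncomputable def ladderHc (n : ℕ) (p : ℕ) : Matrix (Fin n) (Fin n) ℂ :=
  Complex.I • ladderX n p

/-- `c_p(ψ) = |ψ_p| cos (arg ψ_{p+1} - arg ψ_p)` (0-based indices, so this is the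
`p`-th control channel coupling levels `p` and `p+1`); `arg 0 = 0` by convention. -/
noncomputable def ladderC (n : ℕ) (p : ℕ) (ψ : Fin n → ℂ) : ℝ :=
  if h : p + 1 < n then
    ‖ψ ⟨p, Nat.lt_of_succ_lt h⟩‖ *
      Real.cos ((ψ ⟨p + 1, h⟩).arg - (ψ ⟨p, Nat.lt_of_succ_lt h⟩).arg)
  else 0

/-- The feedback control `u_p(ψ) = k_p sign(c_p(ψ)) |c_p(ψ)|^{α_p}` (real power). -/
noncomputable def ladderU (n : ℕ) (k α : ℕ → ℝ) (p : ℕ) (ψ : Fin n → ℂ) : ℝ :=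
  k p * Real.sign (ladderC n p ψ) * |ladderC n p ψ| ^ (α p)

/-- A closed-loop solution: a continuously differentiable `ψ : [0,∞) → ℂⁿ` with
`i ψ'(t) = (H₀ + ∑_p u_p(ψ(t)) H_p) ψ(t)` for all `t ≥ 0`, where
`H₀ = diag(λ₁,…,λₙ)`. -/
def IsLadderSolution (n : ℕ) (lam : Fin n → ℝ) (k α : ℕ → ℝ)
    (ψ : ℝ → Fin n → ℂ) : Prop :=
  ContDiffOn ℝ 1 ψ (Set.Ici 0) ∧
  ∀ t ∈ Set.Ici (0 : ℝ),
    Complex.I • derivWithin ψ (Set.Ici 0) t =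
      (Matrix.diagonal (fun i => (lam i : ℂ)) +
        ∑ p ∈ Finset.range (n - 1), (ladderU n k α p (ψ t) : ℂ) • ladderHc n p).mulVec (ψ t)

section

open Complex Matrix Set
open scoped InnerProductSpace

theorem Complex.real_inner_eq_norm_mul_norm_mul_cos_arg_sub (a b : ℂ) :
    ⟪a, b⟫_ℝ = ‖a‖ * ‖b‖ * Real.cos (b.arg - a.arg) := by
  rw [Complex.inner, mul_re, conj_re, conj_im, Real.cos_sub, ← norm_mul_cos_arg a,
    ← norm_mul_sin_arg a, ← norm_mul_cos_arg b, ← norm_mul_sin_arg b]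
  ring

theorem Real.sign_mul_self_eq_abs (x : ℝ) : Real.sign x * x = |x| := by
  rcases lt_trichotomy x 0 with h | rfl | h
  · rw [Real.sign_of_neg h, abs_of_neg h, neg_one_mul]
  · simp
  · rw [Real.sign_of_pos h, abs_of_pos h, one_mul]

theorem hasDerivWithinAt_sum_sq_norm_of_isHermitian {ι : Type*} [Fintype ι]
    {ψ : ℝ → ι → ℂ} {ψ' : ι → ℂ} {s : Set ℝ} {t : ℝ} {A : Matrix ι ι ℂ}
    (hψ : HasDerivWithinAt ψ ψ' s t) (hA : A.IsHermitian) (hschr : I • ψ' = A *ᵥ ψ t) :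
    HasDerivWithinAt (fun r => ∑ i, ‖ψ r i‖ ^ 2) 0 s t := by
  have hψ' : ψ' = -I • (A *ᵥ ψ t) := by
    rw [← hschr, smul_smul, neg_mul, I_mul_I, neg_neg, one_smul]
  refine (HasDerivWithinAt.fun_sum fun i _ =>
    (hasDerivWithinAt_pi.1 hψ i).norm_sq).congr_deriv ?_
  have hterm : ∀ i, ⟪ψ t i, ψ' i⟫_ℝ = (star (ψ t i) * (A *ᵥ ψ t) i).im := by
    intro i
    simp only [hψ', Complex.inner, Pi.smul_apply, smul_eq_mul, mul_re, mul_im, neg_re, neg_im,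
      I_re, I_im, conj_re, conj_im, Complex.star_def]
    ring
  have hquad : (star (ψ t) ⬝ᵥ (A *ᵥ ψ t)).im = 0 := hA.im_star_dotProduct_mulVec_self (ψ t)
  simp only [hterm, ← Finset.mul_sum, ← im_sum]
  exact mul_eq_zero_of_right 2 hquad

theorem Fintype.sq_norm_le_one {ι E : Type*} [Fintype ι] [Norm E] {v : ι → E}
    (hv : ∑ i, ‖v i‖ ^ 2 = 1) (m : ι) : ‖v m‖ ^ 2 ≤ 1 :=
  hv ▸ Finset.single_le_sum (fun i _ => sq_nonneg ‖v i‖) (Finset.mem_univ m)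

theorem Fintype.one_sub_sq_norm_le {ι E : Type*} [Fintype ι] [DecidableEq ι]
    [SeminormedAddGroup E] {v : ι → E} (hv : ∑ i, ‖v i‖ ^ 2 = 1) (m : ι) {b : ℝ}
    (hb : ∀ i ≠ m, ‖v i‖ ≤ b) :
    1 - ‖v m‖ ^ 2 ≤ (Fintype.card ι - 1 : ℝ) * b ^ 2 := by
  have hsum := Finset.add_sum_erase Finset.univ (fun i => ‖v i‖ ^ 2) (Finset.mem_univ m)
  have hle : ∑ i ∈ Finset.univ.erase m, ‖v i‖ ^ 2 ≤ (Finset.univ.erase m).card • b ^ 2 :=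
    Finset.sum_le_card_nsmul _ _ _ fun i hi =>
      pow_le_pow_left₀ (norm_nonneg _) (hb i (Finset.ne_of_mem_erase hi)) 2
  rw [Finset.card_erase_of_mem (Finset.mem_univ m), Finset.card_univ, nsmul_eq_mul,
    Nat.cast_pred (Fintype.card_pos_iff.mpr ⟨m⟩)] at hle
  linarith

theorem Real.rpow_half_le_mul_rpow {V N b γ : ℝ} (hV : 0 ≤ V) (hVb : V ≤ N * b ^ 2)
    (hN : 1 ≤ N) (hb : 0 ≤ b) (hγ₀ : 0 ≤ γ) (hγ₂ : γ ≤ 2) :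
    V ^ (γ / 2) ≤ N * b ^ γ :=
  calc V ^ (γ / 2) ≤ (N * b ^ 2) ^ (γ / 2) := by gcongr
    _ = N ^ (γ / 2) * b ^ γ := by
      rw [Real.mul_rpow (by linarith) (sq_nonneg b), ← Real.rpow_natCast, ← Real.rpow_mul hb]
      ring_nf
    _ ≤ N * b ^ γ := by
      gcongr
      exact Real.rpow_le_self_of_one_le hN (by linarith)

noncomputable def ladderHamiltonian (n : ℕ) (lam : Fin n → ℝ) (u : ℕ → ℝ) :
    Matrix (Fin n) (Fin n) ℂ :=
  diagonal (fun i => (lam i : ℂ)) + ∑ p ∈ Finset.range (n - 1), (u p : ℂ) • ladderHc n p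

theorem ladderX_conjTranspose (n p : ℕ) : (ladderX n p)ᴴ = -ladderX n p := by
  ext i j
  simp only [conjTranspose_apply, ladderX, of_apply, Matrix.neg_apply]
  split_ifs <;> simp_all

theorem ladderHc_isHermitian (n p : ℕ) : (ladderHc n p).IsHermitian := by
  rw [IsHermitian, ladderHc, conjTranspose_smul, ladderX_conjTranspose, star_def, conj_I,
    neg_smul, smul_neg, neg_neg]

theorem ladderHamiltonian_isHermitian (n : ℕ) (lam : Fin n → ℝ) (u : ℕ → ℝ) :
    (ladderHamiltonian n lam u).IsHermitian :=
  (isHermitian_diagonal_of_self_adjoint _ (funext fun i => conj_ofReal (lam i))).add <|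
    isSelfAdjoint_sum _ fun p _ => (ladderHc_isHermitian n p).smul (conj_ofReal (u p))

theorem ladderX_mulVec_last {n p : ℕ} (hp : p < n - 1) (v : Fin n → ℂ) :
    (ladderX n p *ᵥ v) ⟨n - 1, by omega⟩ = if p = n - 2 then v ⟨n - 2, by omega⟩ else 0 := by
  have hrow : ∀ j : Fin n, ladderX n p ⟨n - 1, by omega⟩ j =
      if p = n - 2 ∧ j = ⟨n - 2, by omega⟩ then 1 else 0 := by
    intro j
    simp only [ladderX, of_apply, Fin.ext_iff]
    split_ifs <;> first | rfl | omega
  simp [mulVec, dotProduct, hrow, ite_and]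

theorem ladderHamiltonian_mulVec_last {n : ℕ} (hn : 2 ≤ n) (lam : Fin n → ℝ) (u : ℕ → ℝ)
    (v : Fin n → ℂ) :
    (ladderHamiltonian n lam u *ᵥ v) ⟨n - 1, Nat.sub_one_lt_of_lt hn⟩ =
      lam ⟨n - 1, Nat.sub_one_lt_of_lt hn⟩ * v ⟨n - 1, Nat.sub_one_lt_of_lt hn⟩ +
        u (n - 2) * I * v ⟨n - 2, Nat.sub_lt_self two_pos hn⟩ := by
  rw [ladderHamiltonian, add_mulVec, Pi.add_apply, mulVec_diagonal, sum_mulVec,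
    Finset.sum_apply]
  have hsum : ∀ p ∈ Finset.range (n - 1),
      (((u p : ℂ) • ladderHc n p) *ᵥ v) ⟨n - 1, Nat.sub_one_lt_of_lt hn⟩ =
        if p = n - 2 then (u p : ℂ) * I * v ⟨n - 2, Nat.sub_lt_self two_pos hn⟩ else 0 := by
    intro p hp
    rw [ladderHc, smul_mulVec, smul_mulVec, Pi.smul_apply, Pi.smul_apply,
      ladderX_mulVec_last (Finset.mem_range.mp hp)]
    split_ifs <;> simp [mul_assoc]
  rw [Finset.sum_congr rfl hsum, Finset.sum_ite_eq' _ (n - 2), if_pos (by simp; omega)]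

theorem ladderC_last {n : ℕ} (hn : 2 ≤ n) (v : Fin n → ℂ) :
    ladderC n (n - 2) v =
      ‖v ⟨n - 2, Nat.sub_lt_self two_pos hn⟩‖ *
        Real.cos ((v ⟨n - 1, Nat.sub_one_lt_of_lt hn⟩).arg -
          (v ⟨n - 2, Nat.sub_lt_self two_pos hn⟩).arg) := by
  rw [ladderC, dif_pos (by omega)]
  congr 5
  simp only [Fin.mk.injEq]
  omega

theorem ladderU_mul_ladderC {n p : ℕ} {k α : ℕ → ℝ} (hα : α p + 1 ≠ 0) (v : Fin n → ℂ) :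
    ladderU n k α p v * ladderC n p v = k p * |ladderC n p v| ^ (α p + 1) := by
  rw [ladderU, Real.rpow_add' (abs_nonneg _) hα, Real.rpow_one, ← Real.sign_mul_self_eq_abs]
  ring

theorem one_sub_sq_norm_last_le {n : ℕ} (hn : 2 ≤ n) {v : Fin n → ℂ}
    (hv : ∑ i, ‖v i‖ ^ 2 = 1)
    (hdom : ∀ j : Fin n, (j : ℕ) < n - 2 → ‖v j‖ ≤ ‖v ⟨n - 2, Nat.sub_lt_self two_pos hn⟩‖) :
    1 - ‖v ⟨n - 1, Nat.sub_one_lt_of_lt hn⟩‖ ^ 2 ≤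
      ((n : ℝ) - 1) * ‖v ⟨n - 2, Nat.sub_lt_self two_pos hn⟩‖ ^ 2 := by
  have hle : ∀ i ≠ (⟨n - 1, Nat.sub_one_lt_of_lt hn⟩ : Fin n),
      ‖v i‖ ≤ ‖v ⟨n - 2, Nat.sub_lt_self two_pos hn⟩‖ := by
    intro i hi
    by_cases hiq : (i : ℕ) = n - 2
    · rw [show i = ⟨n - 2, Nat.sub_lt_self two_pos hn⟩ from Fin.ext hiq]
    · exact hdom i (by have := i.isLt; have := Fin.val_ne_of_ne hi; simp at this; omega)
  simpa using Fintype.one_sub_sq_norm_le hv _ hle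

namespace IsLadderSolution

variable {n : ℕ} {lam : Fin n → ℝ} {k α : ℕ → ℝ} {ψ : ℝ → Fin n → ℂ} {t : ℝ}

theorem hasDerivWithinAt (hψ : IsLadderSolution n lam k α ψ) (ht : t ∈ Ici 0) :
    HasDerivWithinAt ψ (derivWithin ψ (Ici 0) t) (Ici 0) t :=
  (hψ.1.differentiableOn one_ne_zero t ht).hasDerivWithinAt

theorem I_smul_derivWithin_eq (hψ : IsLadderSolution n lam k α ψ) (ht : t ∈ Ici 0) :
    I • derivWithin ψ (Ici 0) t =
      ladderHamiltonian n lam (fun p => ladderU n k α p (ψ t)) *ᵥ ψ t :=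
  hψ.2 t ht

theorem sum_sq_norm_eq (hψ : IsLadderSolution n lam k α ψ) (ht : t ∈ Ici 0) :
    ∑ i, ‖ψ t i‖ ^ 2 = ∑ i, ‖ψ 0 i‖ ^ 2 := by
  have hderiv : ∀ s ∈ Ici (0 : ℝ), HasDerivWithinAt (fun r => ∑ i, ‖ψ r i‖ ^ 2) 0 (Ici 0) s :=
    fun s hs => hasDerivWithinAt_sum_sq_norm_of_isHermitian (hψ.hasDerivWithinAt hs)
      (ladderHamiltonian_isHermitian _ _ _) (hψ.I_smul_derivWithin_eq hs)
  exact constant_of_has_deriv_right_zero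
    (fun s hs => (hderiv s hs.1).continuousWithinAt.mono Icc_subset_Ici_self)
    (fun s hs => (hderiv s hs.1).mono (Ici_subset_Ici.mpr hs.1)) t ⟨ht, le_rfl⟩

theorem hasDerivWithinAt_sq_norm_last (hψ : IsLadderSolution n lam k α ψ) (hn : 2 ≤ n)
    (ht : t ∈ Ici 0) :
    HasDerivWithinAt (fun s => ‖ψ s ⟨n - 1, Nat.sub_one_lt_of_lt hn⟩‖ ^ 2)
      (2 * ‖ψ t ⟨n - 1, Nat.sub_one_lt_of_lt hn⟩‖ *
        (ladderU n k α (n - 2) (ψ t) * ladderC n (n - 2) (ψ t)))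
      (Ici 0) t := by
  set m : Fin n := ⟨n - 1, Nat.sub_one_lt_of_lt hn⟩
  set q : Fin n := ⟨n - 2, Nat.sub_lt_self two_pos hn⟩
  set u := ladderU n k α (n - 2) (ψ t)
  have hrow := congrFun (hψ.I_smul_derivWithin_eq ht) m
  rw [Pi.smul_apply, smul_eq_mul, ladderHamiltonian_mulVec_last hn] at hrow
  have hD : derivWithin ψ (Ici 0) t m = -I * lam m * ψ t m + u * ψ t q := by
    linear_combination (-I) * hrow + (derivWithin ψ (Ici 0) t m - u * ψ t q) * I_sq
  refine ((hasDerivWithinAt_pi.1 (hψ.hasDerivWithinAt ht) m).norm_sq).congr_deriv ?_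
  have hphase : ⟪ψ t m, -I * lam m * ψ t m⟫_ℝ = 0 := by
    simp only [Complex.inner, mul_re, mul_im, neg_re, neg_im, I_re, I_im, ofReal_re, ofReal_im,
      conj_re, conj_im]
    ring
  rw [hD, inner_add_right, hphase, zero_add, ← Complex.real_smul, real_inner_smul_right,
    real_inner_eq_norm_mul_norm_mul_cos_arg_sub, ladderC_last hn, ← Real.cos_neg, neg_sub]
  ring

theorem hasDerivWithinAt_lyapunov (hψ : IsLadderSolution n lam k α ψ) (hn : 2 ≤ n)
    (ht : t ∈ Ici 0) (hα : α (n - 2) + 1 ≠ 0) :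
    HasDerivWithinAt (fun s => 1 - ‖ψ s ⟨n - 1, Nat.sub_one_lt_of_lt hn⟩‖ ^ 2)
      (-(2 * ‖ψ t ⟨n - 1, Nat.sub_one_lt_of_lt hn⟩‖ * k (n - 2) *
        (‖ψ t ⟨n - 2, Nat.sub_lt_self two_pos hn⟩‖ ^ (α (n - 2) + 1) *
          |Real.cos ((ψ t ⟨n - 1, Nat.sub_one_lt_of_lt hn⟩).arg -
            (ψ t ⟨n - 2, Nat.sub_lt_self two_pos hn⟩).arg)| ^ (α (n - 2) + 1))))
      (Ici 0) t := by
  refine ((hψ.hasDerivWithinAt_sq_norm_last hn ht).const_sub 1).congr_deriv ?_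
  rw [ladderU_mul_ladderC hα, ladderC_last hn, abs_mul, abs_of_nonneg (norm_nonneg _),
    Real.mul_rpow (norm_nonneg _) (abs_nonneg _)]
  ring

end IsLadderSolution

end

/-- Let `ψ` be a closed-loop solution of the ladder n-level system
with `‖ψ(0)‖ = 1`, let `β ∈ (0,1)`, and suppose for all `t ≥ 0` that `|ψₙ(t)| ≥ β`
and `|ψ_{n-1}(t)| ≥ |ψ_j(t)|` for `1 ≤ j ≤ n-2` (0-based: components `0,…,n-3`).
Then `d/dt V(ψ(t)) ≤ -(2 β k_{n-1}/(n-1)) g(t) V(ψ(t))^{(α_{n-1}+1)/2}` where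
`g(t) = |cos(arg ψₙ(t) - arg ψ_{n-1}(t))|^{α_{n-1}+1}` (last control channel has
0-based index `n-2`). -/
theorem ladder_lyapunov_differential_inequality
    (n : ℕ) (hn : 2 ≤ n) (lam : Fin n → ℝ)
    (k α : ℕ → ℝ) (hk : ∀ p, p < n - 1 → 0 < k p)
    (hα : ∀ p, p < n - 1 → α p ∈ Set.Ioo (0 : ℝ) 1)
    (ψ : ℝ → Fin n → ℂ) (hψ : IsLadderSolution n lam k α ψ)
    (hnorm : ∑ i, ‖ψ 0 i‖ ^ 2 = 1)
    (β : ℝ)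
    (hlow : ∀ t ∈ Set.Ici (0 : ℝ), β ≤ ‖ψ t ⟨n - 1, by omega⟩‖)
    (hdom : ∀ t ∈ Set.Ici (0 : ℝ), ∀ j : Fin n, (j : ℕ) < n - 2 →
      ‖ψ t j‖ ≤ ‖ψ t ⟨n - 2, by omega⟩‖) :
    ∀ t ∈ Set.Ici (0 : ℝ),
      derivWithin (fun s => 1 - ‖ψ s ⟨n - 1, by omega⟩‖ ^ 2) (Set.Ici 0) t ≤
        -(2 * β * k (n - 2) / ((n : ℝ) - 1)) *
          (|Real.cos ((ψ t ⟨n - 1, by omega⟩).arg - (ψ t ⟨n - 2, by omega⟩).arg)| ^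
            (α (n - 2) + 1)) *
          (1 - ‖ψ t ⟨n - 1, by omega⟩‖ ^ 2) ^ ((α (n - 2) + 1) / 2) := by
  intro t ht
  obtain ⟨hα₀, hα₁⟩ := hα (n - 2) (by omega)
  have hk₀ : 0 ≤ k (n - 2) := (hk (n - 2) (by omega)).le
  set a := ‖ψ t ⟨n - 1, by omega⟩‖
  set b := ‖ψ t ⟨n - 2, by omega⟩‖
  set g :=
    |Real.cos ((ψ t ⟨n - 1, by omega⟩).arg - (ψ t ⟨n - 2, by omega⟩).arg)| ^ (α (n - 2) + 1)
  set γ := α (n - 2) + 1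
  have hnorm_t : ∑ i, ‖ψ t i‖ ^ 2 = 1 := (hψ.sum_sq_norm_eq ht).trans hnorm
  have hN : (1 : ℝ) ≤ n - 1 := by
    have : (2 : ℝ) ≤ n := by exact_mod_cast hn
    linarith
  have hV₀ : 0 ≤ 1 - a ^ 2 := sub_nonneg.mpr (Fintype.sq_norm_le_one hnorm_t _)
  have hVγ : (1 - a ^ 2) ^ (γ / 2) ≤ ((n : ℝ) - 1) * b ^ γ :=
    Real.rpow_half_le_mul_rpow hV₀ (one_sub_sq_norm_last_le hn hnorm_t (hdom t ht)) hN
      (norm_nonneg _) (by linarith) (by linarith)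
  have hg : 0 ≤ g := by positivity
  rw [(hψ.hasDerivWithinAt_lyapunov hn ht (by linarith)).derivWithin (uniqueDiffOn_Ici 0 t ht)]
  calc -(2 * a * k (n - 2) * (b ^ γ * g))
      ≤ -(2 * a * k (n - 2) / ((n : ℝ) - 1) * g * (1 - a ^ 2) ^ (γ / 2)) := by
        rw [neg_le_neg_iff]
        calc 2 * a * k (n - 2) / ((n : ℝ) - 1) * g * (1 - a ^ 2) ^ (γ / 2)
            ≤ 2 * a * k (n - 2) / ((n : ℝ) - 1) * g * (((n : ℝ) - 1) * b ^ γ) := by gcongr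
          _ = 2 * a * k (n - 2) * (b ^ γ * g) := by field_simp
    _ ≤ -(2 * β * k (n - 2) / ((n : ℝ) - 1)) * g * (1 - a ^ 2) ^ (γ / 2) := by
        rw [neg_mul, neg_mul, neg_le_neg_iff]
        gcongr
        exact hlow t ht
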